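/- For real α with 0 < α < 1 and every natural number m, the following Gamma-binomial summation identity holds: Σ_{k=0}^{m} C(α,k) · (m!/( (m-k)! · Γ(k+1-α))) = Γ(m+1)/Γ(m+1-α). Equivalently, the series formula ∂_t^α u = Σ_{k≥0} C(α,k) · t^{k-α}/Γ(k+1-α) · u^{(k)}(t) agrees with the Riemann–Liouville power rule when applied to u(t) = t^m. -/

import Mathlib

open Real

/-- Generalized binomial coefficient `C(α, k) = α(α-1)⋯(α-k+1)/k!`. -/
noncomputable def genBinom (α : ℝ) (k : ℕ) : ℝ :=
  (∏ i ∈ Finset.range k, (α - i)) / (Nat.factorial k)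

/-!
Writing `Γ(m + 1 - α) / Γ(k + 1 - α)` as a falling product turns the `k`-th summand into
`m! / Γ(m + 1 - α) · C(α, k) · C(m - α, m - k)`. Chu–Vandermonde sums these binomial
products to `C(m, m) = 1`, leaving `m! / Γ(m + 1 - α) = Γ(m + 1) / Γ(m + 1 - α)`.
-/

open Finset Nat

lemma genBinom_eq_choose (r : ℝ) (n : ℕ) : genBinom r n = Ring.choose r n := by
  have h := Ring.descPochhammer_eq_factorial_smul_choose r n
  rw [Polynomial.descPochhammer_smeval_eq_ascPochhammer, Polynomial.ascPochhammer_smeval_eq_eval,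
    ← descPochhammer_eval_eq_ascPochhammer, descPochhammer_eval_eq_prod_range, nsmul_eq_mul] at h
  rw [genBinom, h]
  field_simp

lemma genBinom_natCast_self (n : ℕ) : genBinom n n = 1 := by
  rw [genBinom_eq_choose, Ring.choose_natCast, Nat.choose_self, Nat.cast_one]

lemma genBinom_add (x y : ℝ) (m : ℕ) :
    genBinom (x + y) m = ∑ k ∈ range (m + 1), genBinom x k * genBinom y (m - k) := by
  simp only [genBinom_eq_choose]
  rw [Ring.add_choose_eq m (Commute.all x y),
    Nat.sum_antidiagonal_eq_sum_range_succ (fun i j => Ring.choose x i * Ring.choose y j)]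

lemma prod_range_sub_mul_Gamma {x : ℝ} {j : ℕ} (hx : ∀ i < j, x ≠ i) :
    (∏ i ∈ range j, (x - i)) * Gamma (x + 1 - j) = Gamma (x + 1) := by
  induction j with
  | zero => simp
  | succ j ih =>
    have hxj : x - j ≠ 0 := sub_ne_zero.mpr (hx j j.lt_succ_self)
    calc (∏ i ∈ range (j + 1), (x - i)) * Gamma (x + 1 - (j + 1 : ℕ))
        = (∏ i ∈ range j, (x - i)) * ((x - j) * Gamma (x - j)) := by
          rw [prod_range_succ]; push_cast; ring_nf
      _ = (∏ i ∈ range j, (x - i)) * Gamma (x + 1 - j) := by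
          rw [← Gamma_add_one hxj]; ring_nf
      _ = Gamma (x + 1) := ih fun i hi => hx i (hi.trans j.lt_succ_self)

lemma genBinom_mul_factorial_mul_Gamma {x : ℝ} {j : ℕ} (hx : ∀ i < j, x ≠ i) :
    genBinom x j * (j ! * Gamma (x + 1 - j)) = Gamma (x + 1) := by
  rw [genBinom, ← prod_range_sub_mul_Gamma hx]
  field_simp

lemma factorial_div_factorial_mul_Gamma {α : ℝ} (hα : α < 1) {k m : ℕ} (hkm : k ≤ m) :
    (m ! : ℝ) / ((m - k)! * Gamma (k + 1 - α)) =
      m ! / Gamma (m + 1 - α) * genBinom (m - α) (m - k) := by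
  have hcast : ((m - k : ℕ) : ℝ) = m - k := Nat.cast_sub hkm
  have hΓk : Gamma (k + 1 - α) ≠ 0 :=
    (Gamma_pos_of_pos (by linarith [k.cast_nonneg (α := ℝ)])).ne'
  have hΓm : Gamma (m + 1 - α) ≠ 0 :=
    (Gamma_pos_of_pos (by linarith [m.cast_nonneg (α := ℝ)])).ne'
  have hx : ∀ i < m - k, (m : ℝ) - α ≠ i := fun i hi => by
    have : (i : ℝ) + 1 ≤ m := by exact_mod_cast (by omega : i + 1 ≤ m)
    linarith
  have hΓ := genBinom_mul_factorial_mul_Gamma hx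
  rw [hcast, show (m : ℝ) - α + 1 - (m - k) = k + 1 - α by ring,
    show (m : ℝ) - α + 1 = m + 1 - α by ring] at hΓ
  rw [div_mul_eq_mul_div, eq_div_iff hΓm, ← hΓ]
  field_simp

theorem genBinom_gamma_sum_general (α : ℝ) (hα1 : α < 1) (m : ℕ) :
    ∑ k ∈ Finset.range (m + 1),
        genBinom α k *
          ((Nat.factorial m : ℝ) /
            ((Nat.factorial (m - k) : ℝ) * Real.Gamma ((k : ℝ) + 1 - α))) =
      Real.Gamma ((m : ℝ) + 1) / Real.Gamma ((m : ℝ) + 1 - α) := by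
  calc _ = m ! / Gamma (m + 1 - α) *
        ∑ k ∈ range (m + 1), genBinom α k * genBinom (m - α) (m - k) := by
        rw [mul_sum]
        refine sum_congr rfl fun k hk => ?_
        rw [factorial_div_factorial_mul_Gamma hα1 (mem_range_succ_iff.mp hk)]
        ring
    _ = m ! / Gamma (m + 1 - α) * genBinom m m := by rw [← genBinom_add, add_sub_cancel]
    _ = _ := by rw [genBinom_natCast_self, mul_one, Gamma_nat_eq_factorial]

theorem genBinom_gamma_sum (α : ℝ) (hα0 : 0 < α) (hα1 : α < 1) (m : ℕ) :
    ∑ k ∈ Finset.range (m + 1),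
        genBinom α k *
          ((Nat.factorial m : ℝ) /
            ((Nat.factorial (m - k) : ℝ) * Real.Gamma ((k : ℝ) + 1 - α))) =
      Real.Gamma ((m : ℝ) + 1) / Real.Gamma ((m : ℝ) + 1 - α) :=
  genBinom_gamma_sum_general α hα1 m
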